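/- arXiv:2107.01027 — 6 statements merged into one kernel-verified Lean document; each statement's English description precedes it below -/
import Mathlib

section
/- For every integer k ≥ 1, π/4 = 2^(k-1) · arctan(√(2 - a_{k-1}) / a_k). -/
/-!
By the half-angle formulas, `a k = 2 cos θ` and `√(2 - a (k - 1)) = 2 sin θ` for `θ = π / 2 ^ (k + 1)`,
so the arctangent equals `θ`.
-/

open Real

noncomputable def a : ℕ → ℝ
  | 0 => 0
  | k + 1 => Real.sqrt (2 + a k)

lemma a_eq_sqrtTwoAddSeries (k : ℕ) : a k = sqrtTwoAddSeries 0 k := by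
  induction k with
  | zero => rfl
  | succ k ih => rw [a, ih, sqrtTwoAddSeries]

lemma arctan_sqrt_two_sub_sqrtTwoAddSeries_div (n : ℕ) :
    arctan (√(2 - sqrtTwoAddSeries 0 n) / sqrtTwoAddSeries 0 (n + 1)) = π / 2 ^ (n + 2) := by
  have hsin := sin_pi_over_two_pow_succ n
  have hcos := cos_pi_over_two_pow (n + 1)
  have hquot : √(2 - sqrtTwoAddSeries 0 n) / sqrtTwoAddSeries 0 (n + 1) = tan (π / 2 ^ (n + 2)) := by
    rw [tan_eq_sin_div_cos, hsin, hcos]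
    ring
  have hpos : 0 < π / 2 ^ (n + 2) := by positivity
  have hlt : π / 2 ^ (n + 2) < π / 2 :=
    div_lt_div_of_pos_left pi_pos two_pos (by
      calc (2 : ℝ) < 2 ^ 2 := by norm_num
        _ ≤ 2 ^ (n + 2) := pow_le_pow_right₀ one_le_two (by omega))
  rw [hquot, arctan_tan (by linarith) hlt]

theorem stmt_0 : ∀ k : ℕ, 1 ≤ k →
    Real.pi / 4 = 2 ^ (k - 1) * Real.arctan (Real.sqrt (2 - a (k - 1)) / a k) := by
  intro k hk
  obtain ⟨n, rfl⟩ := Nat.exists_eq_add_of_le' hk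
  rw [Nat.add_sub_cancel, a_eq_sqrtTwoAddSeries, a_eq_sqrtTwoAddSeries,
    arctan_sqrt_two_sub_sqrtTwoAddSeries_div, pow_add]
  field_simp
  norm_num
end

section
/- For every integer N ≥ 1, π/4 = Σ_{n=1}^{N} arctan( N / ((n-1)·n + N²) ). -/
/-!
By the subtraction formula for `arctan`, the `n`-th summand is `arctan (n / N) - arctan ((n - 1) / N)`,
so the sum telescopes to `arctan (N / N) = arctan 1 = π / 4`.
-/

open Real Finset

theorem Real.arctan_sub_arctan {x y : ℝ} (h : -1 < x * y) :
    arctan x - arctan y = arctan ((x - y) / (1 + x * y)) := by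
  rw [sub_eq_add_neg, ← arctan_neg, arctan_add (by linarith), mul_neg, sub_neg_eq_add,
    ← sub_eq_add_neg]

theorem Real.arctan_add_one_div_sub_arctan_div {x : ℝ} (hx : x ≠ 0) (m : ℕ) :
    arctan ((m + 1) / x) - arctan (m / x) = arctan (x / (m * (m + 1) + x ^ 2)) := by
  have hprod : -1 < (m + 1) / x * (m / x) := by
    have : 0 ≤ (m + 1) / x * (m / x) := by
      rw [div_mul_div_comm, ← sq]; positivity
    linarith
  rw [arctan_sub_arctan hprod]
  congr 1
  field_simp
  ring

theorem sum_Icc_arctan_div_eq_arctan_div {x : ℝ} (hx : x ≠ 0) (M : ℕ) :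
    ∑ n ∈ Icc 1 M, arctan (x / (((n : ℝ) - 1) * n + x ^ 2)) = arctan (M / x) := by
  induction M with
  | zero => simp
  | succ m ih =>
    rw [sum_Icc_succ_top (Nat.le_add_left 1 m), ih, Nat.cast_succ, add_sub_cancel_right,
      ← arctan_add_one_div_sub_arctan_div hx m, add_sub_cancel]

theorem stmt_6 : ∀ N : ℕ, 1 ≤ N →
    Real.pi / 4 =
      ∑ n ∈ Finset.Icc 1 N, Real.arctan ((N : ℝ) / (((n : ℝ) - 1) * (n : ℝ) + (N : ℝ) ^ 2)) := by
  intro N hN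
  rw [sum_Icc_arctan_div_eq_arctan_div (by positivity), div_self (by positivity), arctan_one]
end

section
/- Let α be a positive integer and let β₁, β₂ be nonzero real numbers such that π/4 = α·arctan(1/β₁) + arctan(1/β₂). Then, as an identity of complex numbers, ((β₁ + i)/(β₁ - i))^α · (β₂ + i)/(β₂ - i) = i. -/
/-! Since `tan (arctan (1/β)) = 1/β`, the Cayley transform `(β + i)/(β - i) = (1 + i/β)/(1 - i/β)`
equals `exp (2 i arctan (1/β))`. The left-hand side is therefore
`exp (2 i (α arctan (1/β₁) + arctan (1/β₂))) = exp (i π/2) = i`. -/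

open Complex

theorem Complex.exp_two_mul_mul_I {z : ℂ} (hz : cos z ≠ 0) :
    exp (2 * z * I) = (1 + tan z * I) / (1 - tan z * I) := by
  have hplus : exp (z * I) = cos z + sin z * I := exp_mul_I z
  have hminus : exp (-z * I) = cos z - sin z * I := by
    rw [exp_mul_I, cos_neg, sin_neg]; ring
  have hden : cos z - sin z * I ≠ 0 := hminus ▸ exp_ne_zero _
  calc exp (2 * z * I) = exp (z * I) / exp (-z * I) := by rw [← exp_sub]; ring_nf
    _ = (cos z + sin z * I) / (cos z - sin z * I) := by rw [hplus, hminus]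
    _ = (1 + tan z * I) / (1 - tan z * I) := by
      rw [tan_eq_sin_div_cos]
      field_simp

theorem Complex.ofReal_add_I_div_sub_I {β : ℝ} (hβ : β ≠ 0) :
    ((β : ℂ) + I) / ((β : ℂ) - I) = exp (2 * (Real.arctan (1 / β) : ℂ) * I) := by
  have hcos : cos (Real.arctan (1 / β) : ℂ) ≠ 0 := by
    rw [← ofReal_cos, ofReal_ne_zero]
    exact (Real.cos_arctan_pos _).ne'
  rw [exp_two_mul_mul_I hcos, ← ofReal_tan, Real.tan_arctan]
  have hβ' : (β : ℂ) ≠ 0 := ofReal_ne_zero.mpr hβ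
  push_cast
  field_simp

theorem stmt_7_general (α : ℕ) (β₁ β₂ : ℝ) (hβ₁ : β₁ ≠ 0) (hβ₂ : β₂ ≠ 0)
    (h : Real.pi / 4 = (α : ℝ) * Real.arctan (1 / β₁) + Real.arctan (1 / β₂)) :
    (((β₁ : ℂ) + I) / ((β₁ : ℂ) - I)) ^ α * (((β₂ : ℂ) + I) / ((β₂ : ℂ) - I)) = I := by
  have hangle : (α : ℂ) * (2 * (Real.arctan (1 / β₁) : ℂ) * I)
      + 2 * (Real.arctan (1 / β₂) : ℂ) * I = Real.pi / 2 * I := by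
    have h' : (Real.pi : ℂ) / 4 = α * (Real.arctan (1 / β₁) : ℂ) + Real.arctan (1 / β₂) := by
      exact_mod_cast h
    linear_combination (-2 * I) * h'
  rw [ofReal_add_I_div_sub_I hβ₁, ofReal_add_I_div_sub_I hβ₂, ← exp_nat_mul, ← exp_add, hangle,
    exp_pi_div_two_mul_I]

theorem stmt_7 (α : ℕ) (hα : 0 < α) (β₁ β₂ : ℝ) (hβ₁ : β₁ ≠ 0) (hβ₂ : β₂ ≠ 0)
    (h : Real.pi / 4 = (α : ℝ) * Real.arctan (1 / β₁) + Real.arctan (1 / β₂)) :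
    (((β₁ : ℂ) + I) / ((β₁ : ℂ) - I)) ^ α * (((β₂ : ℂ) + I) / ((β₂ : ℂ) - I)) = I :=
  stmt_7_general α β₁ β₂ hβ₁ hβ₂ h
end

section
/- Let k ≥ 2 be an integer and let β₁ be a rational number with β₁ > 1. Set φ = 2^(k-1)·arctan(2β₁/(β₁² - 1)) and suppose sin(φ) ≠ 1. Then the real number β₂ = cos(φ)/(1 - sin(φ)) is rational, i.e., there exists q ∈ ℚ with (q : ℝ) = β₂. -/
/-!
Since `1 + (2β/(β² - 1))² = ((β² + 1)/(β² - 1))²` is a rational square, the angle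
`θ = arctan (2β/(β² - 1))` has rational cosine and sine. By the addition formulas, such angles
form an additive subgroup of `ℝ`, so `φ = 2^(k-1) θ` has rational cosine and sine as well.
-/

open Real

def rationalAngles : AddSubgroup ℝ where
  carrier := {θ | ∃ c s : ℚ, cos θ = c ∧ sin θ = s}
  zero_mem' := ⟨1, 0, by simp, by simp⟩
  add_mem' := by
    rintro θ ψ ⟨c, s, hc, hs⟩ ⟨c', s', hc', hs'⟩
    exact ⟨c * c' - s * s', s * c' + c * s', by rw [cos_add]; push_cast; rw [hc, hc', hs, hs'],
      by rw [sin_add]; push_cast; rw [hc, hc', hs, hs']⟩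
  neg_mem' := by
    rintro θ ⟨c, s, hc, hs⟩
    exact ⟨c, -s, by rw [cos_neg, hc], by rw [sin_neg, hs]; push_cast; rfl⟩

theorem arctan_mem_rationalAngles {x r : ℚ} (h : 1 + x ^ 2 = r ^ 2) :
    arctan x ∈ rationalAngles := by
  have hsqrt : √(1 + (x : ℝ) ^ 2) = |(r : ℝ)| := by
    rw [← Real.sqrt_sq_eq_abs]; exact_mod_cast congrArg Real.sqrt (by exact_mod_cast h)
  refine ⟨1 / |r|, x / |r|, ?_, ?_⟩
  · rw [cos_arctan, hsqrt]; push_cast; rfl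
  · rw [sin_arctan, hsqrt]; push_cast; rfl

theorem one_add_sq_div_sq_sub_one {K : Type*} [Field K] {b : K} (hb : b ^ 2 ≠ 1) :
    1 + (2 * b / (b ^ 2 - 1)) ^ 2 = ((b ^ 2 + 1) / (b ^ 2 - 1)) ^ 2 := by
  have : b ^ 2 - 1 ≠ 0 := sub_ne_zero.mpr hb
  field_simp
  ring

theorem stmt_11_general (k : ℕ) (β₁ : ℚ) (hβ₁ : 1 < β₁)
    (φ : ℝ)
    (hφ : φ = (2 : ℝ) ^ (k - 1) * Real.arctan (2 * (β₁ : ℝ) / ((β₁ : ℝ) ^ 2 - 1))) :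
    ∃ q : ℚ, (q : ℝ) = Real.cos φ / (1 - Real.sin φ) := by
  have hβ₁sq : β₁ ^ 2 ≠ 1 := by nlinarith
  have harctan : arctan (2 * (β₁ : ℝ) / ((β₁ : ℝ) ^ 2 - 1)) ∈ rationalAngles := by
    exact_mod_cast arctan_mem_rationalAngles (one_add_sq_div_sq_sub_one hβ₁sq)
  obtain ⟨c, s, hc, hs⟩ : φ ∈ rationalAngles := by
    rw [hφ, ← Nat.cast_ofNat, ← Nat.cast_pow, ← nsmul_eq_mul]
    exact rationalAngles.nsmul_mem harctan _
  exact ⟨c / (1 - s), by rw [hc, hs]; push_cast; rfl⟩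

theorem stmt_11 (k : ℕ) (hk : 2 ≤ k) (β₁ : ℚ) (hβ₁ : 1 < β₁)
    (φ : ℝ)
    (hφ : φ = (2 : ℝ) ^ (k - 1) * Real.arctan (2 * (β₁ : ℝ) / ((β₁ : ℝ) ^ 2 - 1)))
    (hsin : Real.sin φ ≠ 1) :
    ∃ q : ℚ, (q : ℝ) = Real.cos φ / (1 - Real.sin φ) :=
  stmt_11_general k β₁ hβ₁ φ hφ
end

section
/- With u₁(k) = ⌊a_k / √(2 - a_{k-1})⌋, the sequence k ↦ (a_k / √(2 - a_{k-1})) / u₁(k) (for k ≥ 2) converges to 1 as k → ∞. -/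
open Filter

noncomputable def u₁ (k : ℕ) : ℤ := ⌊a k / Real.sqrt (2 - a (k - 1))⌋

/-! Since `(2 - a (k+1)) * (2 + a (k+1)) = 2 - a k` and `a (k+1) ≥ 1`, the gap `2 - a k` shrinks
at least by a factor 3 at each step. Hence `a (k+1) / √(2 - a k)` tends to infinity, and
`x / ⌊x⌋ → 1` as `x → ∞`. -/

open Topology

theorem tendsto_div_intFloor_atTop {R : Type*} [TopologicalSpace R] [Field R] [LinearOrder R]
    [IsStrictOrderedRing R] [OrderTopology R] [FloorRing R] :
    Tendsto (fun x : R => x / ⌊x⌋) atTop (𝓝 1) := by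
  have h := (tendsto_nat_floor_div_atTop (R := R)).inv₀ one_ne_zero
  rw [inv_one] at h
  refine h.congr' ?_
  filter_upwards [eventually_ge_atTop 0] with x hx
  rw [inv_div, ← Int.natCast_floor_eq_floor hx, Int.cast_natCast]

theorem a_nonneg : ∀ k, 0 ≤ a k
  | 0 => le_rfl
  | _ + 1 => Real.sqrt_nonneg _

theorem a_succ_sq (k : ℕ) : a (k + 1) ^ 2 = 2 + a k :=
  Real.sq_sqrt (by linarith [a_nonneg k])

theorem one_le_a_succ (k : ℕ) : 1 ≤ a (k + 1) :=
  Real.one_le_sqrt.mpr (by linarith [a_nonneg k])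

theorem a_lt_two : ∀ k, a k < 2
  | 0 => two_pos
  | k + 1 => by nlinarith [a_succ_sq k, a_lt_two k, a_nonneg (k + 1)]

theorem two_sub_a_succ_le (k : ℕ) : 2 - a (k + 1) ≤ (2 - a k) / 3 := by
  nlinarith [a_succ_sq k, a_lt_two (k + 1), one_le_a_succ k]

theorem two_sub_a_le (k : ℕ) : 2 - a k ≤ 2 * 3⁻¹ ^ k := by
  induction k with
  | zero => simp [a]
  | succ k ih => linarith [two_sub_a_succ_le k, pow_succ (3⁻¹ : ℝ) k]

theorem tendsto_two_sub_a : Tendsto (fun k => 2 - a k) atTop (𝓝 0) := by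
  have hgeom : Tendsto (fun k : ℕ => 2 * (3⁻¹ : ℝ) ^ k) atTop (𝓝 0) := by
    simpa using (tendsto_pow_atTop_nhds_zero_of_lt_one (r := (3⁻¹ : ℝ)) (by norm_num)
      (by norm_num)).const_mul 2
  exact tendsto_of_tendsto_of_tendsto_of_le_of_le tendsto_const_nhds hgeom
    (fun k => sub_nonneg.mpr (a_lt_two k).le) two_sub_a_le

theorem tendsto_a_succ_div_sqrt_atTop :
    Tendsto (fun k => a (k + 1) / Real.sqrt (2 - a k)) atTop atTop := by
  have hsqrt : Tendsto (fun k => Real.sqrt (2 - a k)) atTop (𝓝[>] 0) :=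
    tendsto_nhdsWithin_iff.mpr
      ⟨by simpa [Function.comp_def] using (Real.continuous_sqrt.tendsto 0).comp tendsto_two_sub_a,
        .of_forall fun k => Real.sqrt_pos.mpr (sub_pos.mpr (a_lt_two k))⟩
  refine tendsto_atTop_mono (fun k => ?_) (tendsto_inv_nhdsGT_zero.comp hsqrt)
  rw [Function.comp_apply, ← one_div]
  exact div_le_div_of_nonneg_right (one_le_a_succ k) (Real.sqrt_nonneg _)

theorem stmt_13 :
    Tendsto (fun k : ℕ => (a (k + 2) / Real.sqrt (2 - a (k + 1))) / (u₁ (k + 2) : ℝ)) atTop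
      (nhds 1) :=
  (tendsto_div_intFloor_atTop.comp tendsto_a_succ_div_sqrt_atTop).comp (tendsto_add_atTop_nat 1)
end

section
/- For every integer k ≥ 2, with u₁(k) = ⌊a_k / √(2 - a_{k-1})⌋ and φ_k = 2^(k-1)·arctan(2·u₁(k)/(u₁(k)² - 1)), the following exact two-term Machin-like identity holds: π/4 = 2^(k-1)·arctan(1/u₁(k)) + arctan( (1 - sin(φ_k)) / cos(φ_k) ). -/
noncomputable def φ (k : ℕ) : ℝ :=
  (2 : ℝ) ^ (k - 1) * Real.arctan (2 * (u₁ k : ℝ) / ((u₁ k : ℝ) ^ 2 - 1))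

/-!
Put `x = π / 2 ^ (k + 1)`. Since `2 + 2 cos 2x = (2 cos x)²` and `2 - 2 cos 2x = (2 sin x)²`,
we have `a k = 2 cos x` and `√(2 - a (k - 1)) = 2 sin x`, so `u₁ k = ⌊cot x⌋`, while
`2 ^ (k - 1) * x = π / 4`. From `cot x - 1 < u ≤ cot x` we get `x ≤ arctan (1 / u) < 2 x`, so
`θ = 2 ^ (k - 1) arctan (1 / u)` lies in `[π / 4, π / 2)`. The double-angle formula for
`arctan` gives `φ k = 2 θ`, and `(1 - sin 2θ) / cos 2θ = tan (π / 4 - θ)` with `π / 4 - θ`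
in the range of `arctan`.
-/

open Real

lemma two_mul_pi_div_two_pow_succ (k : ℕ) : 2 * (π / 2 ^ (k + 1)) = π / 2 ^ k := by
  rw [pow_succ]; field_simp

lemma pi_div_two_pow_succ_le (k : ℕ) : π / 2 ^ (k + 1) ≤ π / 2 :=
  div_le_div_of_nonneg_left pi_pos.le two_pos (le_self_pow₀ one_le_two k.succ_ne_zero)

lemma a_eq_two_mul_cos (k : ℕ) : a k = 2 * cos (π / 2 ^ (k + 1)) := by
  induction k with
  | zero => simp [a]
  | succ k ih =>
    set y := π / 2 ^ (k + 2)
    have hy : 0 ≤ cos y := cos_nonneg_of_mem_Icc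
      ⟨by linarith [show 0 < y by positivity, pi_pos], pi_div_two_pow_succ_le (k + 1)⟩
    have hsq : 2 + a k = (2 * cos y) ^ 2 := by
      rw [ih, ← two_mul_pi_div_two_pow_succ, cos_two_mul]; ring
    rw [a, hsq, sqrt_sq (by positivity)]

lemma sqrt_two_sub_a (k : ℕ) : √(2 - a k) = 2 * sin (π / 2 ^ (k + 2)) := by
  set y := π / 2 ^ (k + 2)
  have hy : 0 ≤ sin y := sin_nonneg_of_nonneg_of_le_pi (by positivity)
    ((pi_div_two_pow_succ_le (k + 1)).trans (by linarith [pi_pos]))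
  have hsq : 2 - a k = (2 * sin y) ^ 2 := by
    rw [a_eq_two_mul_cos, ← two_mul_pi_div_two_pow_succ, cos_two_mul, cos_sq']; ring
  rw [hsq, sqrt_sq (by positivity)]

lemma a_succ_div_sqrt_two_sub_a (k : ℕ) :
    a (k + 1) / √(2 - a k) = cot (π / 2 ^ (k + 2)) := by
  rw [a_eq_two_mul_cos, sqrt_two_sub_a, cot_eq_cos_div_sin, mul_div_mul_left _ _ two_ne_zero]

lemma arctan_inv_cot {x : ℝ} (h₀ : 0 < x) (h₁ : x < π / 2) : arctan (cot x)⁻¹ = x := by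
  rw [cot_inv_eq_tan, arctan_tan (by linarith) h₁]

lemma pi_div_eight_lt_arctan_inv_two : π / 8 < arctan 2⁻¹ := by
  have h : arctan 3⁻¹ < arctan 2⁻¹ := arctan_strictMono (by norm_num)
  linarith [arctan_inv_2_add_arctan_inv_3]

lemma two_lt_cot {x : ℝ} (h₀ : 0 < x) (h₁ : x ≤ π / 8) : 2 < cot x := by
  have htan : 0 < tan x := tan_pos_of_pos_of_lt_pi_div_two h₀ (by linarith [pi_pos])
  have htan₂ : tan x < 2⁻¹ := by
    rw [← arctan_lt_arctan_iff, arctan_tan (by linarith) (by linarith [pi_pos])]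
    linarith [pi_div_eight_lt_arctan_inv_two]
  rw [← inv_inv (cot x), cot_inv_eq_tan]
  exact lt_inv_of_lt_inv₀ htan htan₂

lemma arctan_two_mul_div_sq_sub_one {u : ℝ} (hu : 1 < u) :
    arctan (2 * u / (u ^ 2 - 1)) = 2 * arctan u⁻¹ := by
  have hu₀ : u ≠ 0 := by positivity
  have hu₁ : u ^ 2 - 1 ≠ 0 := by nlinarith
  have hinv : -1 < u⁻¹ := by linarith [inv_pos.2 (zero_lt_one.trans hu)]
  rw [two_mul_arctan hinv (inv_lt_one_of_one_lt₀ hu)]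
  congr 1
  field_simp

lemma arctan_inv_le_arctan_inv_floor {c : ℝ} (hc : 1 ≤ c) :
    arctan c⁻¹ ≤ arctan (⌊c⌋ : ℝ)⁻¹ := by
  have hu : (1 : ℝ) ≤ ⌊c⌋ := by exact_mod_cast Int.le_floor.2 (by exact_mod_cast hc)
  exact arctan_le_arctan_iff.2 (inv_anti₀ (by linarith) (Int.floor_le c))

/-- As `c - 1 < ⌊c⌋`, this reduces to `c ^ 2 - 1 ≤ 2 c (c - 1)`, i.e. `0 ≤ (c - 1) ^ 2`. -/
lemma arctan_inv_floor_lt_two_mul_arctan_inv {c : ℝ} (hc : 1 < c) :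
    arctan (⌊c⌋ : ℝ)⁻¹ < 2 * arctan c⁻¹ := by
  have hu : (1 : ℝ) ≤ ⌊c⌋ := by exact_mod_cast Int.le_floor.2 (by exact_mod_cast hc.le)
  have hlt : c - 1 < ⌊c⌋ := Int.sub_one_lt_floor c
  rw [← arctan_two_mul_div_sq_sub_one hc, arctan_lt_arctan_iff,
    inv_lt_iff_one_lt_mul₀ (by linarith), div_mul_eq_mul_div, one_lt_div (by nlinarith)]
  nlinarith

/-- This holds for every `θ`: where `cos (2 * θ) = 0`, both sides are `0` by `x / 0 = 0`. -/
lemma one_sub_sin_two_mul_div_cos_two_mul (θ : ℝ) :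
    (1 - sin (2 * θ)) / cos (2 * θ) = tan (π / 4 - θ) := by
  have h₁ : 1 - sin (2 * θ) = (cos θ - sin θ) * (cos θ - sin θ) := by
    rw [sin_two_mul]; linear_combination -sin_sq_add_cos_sq θ
  have h₂ : cos (2 * θ) = (cos θ - sin θ) * (cos θ + sin θ) := by
    rw [cos_two_mul]; linear_combination sin_sq_add_cos_sq θ
  have h₃ : tan (π / 4 - θ) = (cos θ - sin θ) / (cos θ + sin θ) := by
    rw [tan_eq_sin_div_cos, sin_sub, cos_sub, sin_pi_div_four, cos_pi_div_four, ← mul_sub,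
      ← mul_add, mul_div_mul_left _ _ (by positivity)]
  rw [h₁, h₂, h₃]
  by_cases h : cos θ - sin θ = 0
  · simp [h]
  · exact mul_div_mul_left _ _ h

lemma arctan_one_sub_sin_two_mul_div_cos_two_mul {θ : ℝ} (h₁ : -(π / 4) < θ)
    (h₂ : θ < 3 * π / 4) : arctan ((1 - sin (2 * θ)) / cos (2 * θ)) = π / 4 - θ := by
  rw [one_sub_sin_two_mul_div_cos_two_mul, arctan_tan (by linarith) (by linarith)]

theorem pi_div_four_eq_machin_floor {c : ℝ} (n : ℕ) (hc : 2 ≤ c)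
    (h : 2 ^ n * arctan c⁻¹ = π / 4) :
    π / 4 = 2 ^ n * arctan (⌊c⌋ : ℝ)⁻¹ +
      arctan ((1 - sin (2 ^ n * arctan (2 * ⌊c⌋ / ((⌊c⌋ : ℝ) ^ 2 - 1)))) /
        cos (2 ^ n * arctan (2 * ⌊c⌋ / ((⌊c⌋ : ℝ) ^ 2 - 1)))) := by
  set θ := 2 ^ n * arctan (⌊c⌋ : ℝ)⁻¹
  have hu : (1 : ℝ) < ⌊c⌋ := by exact_mod_cast Int.le_floor.2 (by exact_mod_cast hc)
  have hpow : (0 : ℝ) < 2 ^ n := by positivity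
  have hlb : π / 4 ≤ θ := h ▸ mul_le_mul_of_nonneg_left
    (arctan_inv_le_arctan_inv_floor (by linarith)) hpow.le
  have hub : θ < π / 2 := by
    have := mul_lt_mul_of_pos_left
      (arctan_inv_floor_lt_two_mul_arctan_inv (c := c) (by linarith)) hpow
    linarith
  rw [arctan_two_mul_div_sq_sub_one hu, mul_left_comm,
    arctan_one_sub_sin_two_mul_div_cos_two_mul (by linarith [pi_pos]) (by linarith [pi_pos])]
  ring

theorem stmt_15 : ∀ k : ℕ, 2 ≤ k →
    Real.pi / 4 =
      (2 : ℝ) ^ (k - 1) * Real.arctan (1 / (u₁ k : ℝ)) +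
        Real.arctan ((1 - Real.sin (φ k)) / Real.cos (φ k)) := by
  intro k hk
  obtain ⟨m, rfl⟩ : ∃ m, k = m + 2 := ⟨k - 2, by omega⟩
  set x := π / 2 ^ (m + 3) with hx
  have hx₀ : 0 < x := by positivity
  have hx₁ : x ≤ π / 8 := by
    have : (2 : ℝ) ^ 3 ≤ 2 ^ (m + 3) := pow_le_pow_right₀ (by norm_num) (by omega)
    exact div_le_div_of_nonneg_left pi_pos.le (by norm_num) (by linarith)
  have hc : a (m + 2) / √(2 - a (m + 1)) = cot x := a_succ_div_sqrt_two_sub_a (m + 1)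
  have hangle : 2 ^ (m + 1) * arctan (cot x)⁻¹ = π / 4 := by
    rw [arctan_inv_cot hx₀ (by linarith [pi_pos]), hx]
    field_simp
    ring
  have := pi_div_four_eq_machin_floor (m + 1) (two_lt_cot hx₀ hx₁).le hangle
  simpa only [φ, u₁, one_div, show m + 2 - 1 = m + 1 from rfl, hc] using this
end
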